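/- arXiv:math/0609583 — 2 statements merged into one kernel-verified Lean document; each statement's English description precedes it below -/
import Mathlib

section
/- Let ≺_gr be a graded monomial ordering on B and I an ideal of R; put J = ⟨HT(I)⟩, the (ℕ-graded) ideal of R generated by the head terms of I. Then: (i) LM(J) = LM(I); (ii) a generating set G of I is a Gröbner basis of I with respect to (B, ≺_gr) if and only if HT(G) is a Gröbner basis of the ℕ-graded ideal J with respect to (B, ≺_gr). -/
/-!
Common setting: K a field, R a K-algebra with a skew multiplicative K-basis
B = {b i : i ∈ ι} (for u, v ∈ B either uv = 0 or uv = λw with λ ∈ K*, w ∈ B;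
this is encoded by the partial multiplication `mulIdx` on indices), ℕ-graded
by the length function `deg` (R_p is spanned by the monomials of length p,
and lengths are additive for nonzero products).  A monomial ordering on B is
a well-order on ι compatible with the partial multiplication (axioms
(Mo1)-(Mo3)); a graded monomial ordering moreover refines the length function.
`IsLM b f i` says b i = LM(f); `IsHTdeg deg b f h` says h = HT(f), the nonzero
homogeneous component of f of highest degree.
-/

open Function

universe u v w x

variable (K : Type u) [Field K]

/-- The two-sided ideal (as a `K`-subspace) of `R` generated by `S`. -/
def twoSidedSpan (R : Type w) [Ring R] [Algebra K R] (S : Set R) : Submodule K R :=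
  sInf {J : Submodule K R | S ⊆ J ∧ ∀ r : R, ∀ x ∈ J, r * x ∈ J ∧ x * r ∈ J}

variable {R : Type w} [Ring R] [Algebra K R] {ι : Type v} [LinearOrder ι]

/-- `IsLM b f i` : the leading monomial of `f` is `b i`. -/
def IsLM (b : Module.Basis ι K R) (f : R) (i : ι) : Prop :=
  (b.repr f) i ≠ 0 ∧ ∀ j, (b.repr f) j ≠ 0 → j ≤ i

/-- The set of leading monomials of (nonzero) elements of `S`. -/
def LMset (b : Module.Basis ι K R) (S : Set R) : Set R :=
  {m | ∃ f ∈ S, ∃ i, IsLM K b f i ∧ m = b i}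

/-- `G` is a Gröbner basis of the ideal `I` w.r.t. `(B, ≺)` : `⟨LM(I)⟩ = ⟨LM(G)⟩`. -/
def IsGroebnerBasis (b : Module.Basis ι K R) (I : Submodule K R) (G : Set R) : Prop :=
  twoSidedSpan K R (LMset K b (I : Set R)) = twoSidedSpan K R (LMset K b G)

/-- `IsHTdeg deg b f h` : `h` is the head term HT(f) of `f` w.r.t. the
ℕ-grading of R by `deg`: the (nonzero) homogeneous component of `f` of
highest degree. -/
def IsHTdeg (deg : ι → ℕ) (b : Module.Basis ι K R) (f h : R) : Prop :=
  ∃ p : ℕ, h ≠ 0 ∧ (∀ j, (b.repr h) j = if deg j = p then (b.repr f) j else 0) ∧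
    ∀ j, (b.repr f) j ≠ 0 → deg j ≤ p

/-- The set of head terms of (nonzero) elements of `S`. -/
def HTset (deg : ι → ℕ) (b : Module.Basis ι K R) (S : Set R) : Set R :=
  {h | ∃ f ∈ S, IsHTdeg K deg b f h}

/-- The axioms on the data `(b, mulIdx, deg, ≺)`: `b` is a skew multiplicative
K-basis with index-multiplication `mulIdx`, `deg` is additive on it, and the
order on `ι` is a graded monomial ordering. -/
structure IsGradedMonomialOrdering (b : Module.Basis ι K R) (mulIdx : ι → ι → Option ι)
    (deg : ι → ℕ) : Prop where
  /-- skew multiplicativity: `b i * b j` is 0 or a nonzero multiple of `b (mulIdx i j)` -/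
  hmul : ∀ i j : ι, (mulIdx i j = none ∧ b i * b j = 0) ∨
    ∃ (k : ι) (c : K), mulIdx i j = some k ∧ c ≠ 0 ∧ b i * b j = c • b k
  /-- (Mo1): right multiplication is strictly monotone on nonzero products -/
  mo1 : ∀ {i j k p q : ι}, i < j → mulIdx i k = some p → mulIdx j k = some q → p < q
  /-- (Mo2): left multiplication is strictly monotone on nonzero products -/
  mo2 : ∀ {i j k p q : ι}, i < j → mulIdx k i = some p → mulIdx k j = some q → p < q
  /-- (Mo3): factors precede products -/
  mo3 : ∀ {i j k : ι}, mulIdx i j = some k → i ≤ k ∧ j ≤ k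
  /-- ≺ is a well-order -/
  wf : WellFoundedLT ι
  /-- `deg` (the length) is additive on nonzero products -/
  deg_add : ∀ {i j k : ι}, mulIdx i j = some k → deg k = deg i + deg j
  /-- the ordering is graded: it refines the length function -/
  graded : ∀ {i j : ι}, deg i < deg j → i < j

/-!
STATEMENT 17.  ≺_gr a graded monomial ordering on B, I an ideal of R,
J = ⟨HT(I)⟩.  Then (i) LM(J) = LM(I); (ii) a generating set G of I is a
Gröbner basis of I w.r.t. (B, ≺_gr) iff HT(G) is a Gröbner basis of the
ℕ-graded ideal J w.r.t. (B, ≺_gr).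
-/

set_option linter.unusedSectionVars false
set_option maxHeartbeats 1000000






/-- The submodule of elements supported on indices satisfying `P`. -/
def sect (b : Module.Basis ι K R) (P : ι → Prop) : Submodule K R where
  carrier := {x | ∀ m, b.repr x m ≠ 0 → P m}
  add_mem' := by
    intro x y hx hy m hm
    rw [map_add, Finsupp.add_apply] at hm
    by_cases h : b.repr x m = 0
    · exact hy m (by intro h'; rw [h, h', add_zero] at hm; exact hm rfl)
    · exact hx m h
  zero_mem' := by intro m hm; simp at hm
  smul_mem' := by
    intro c x hx m hm
    refine hx m fun h => ?_
    rw [map_smul, Finsupp.smul_apply, h, smul_zero] at hm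
    exact hm rfl

theorem mem_sect {b : Module.Basis ι K R} {P : ι → Prop} {x : R} :
    x ∈ sect K b P ↔ ∀ m, b.repr x m ≠ 0 → P m := Iff.rfl

theorem basis_mem_sect {b : Module.Basis ι K R} {P : ι → Prop} {i : ι} (hi : P i) :
    b i ∈ sect K b P := by
  intro m hm
  rw [b.repr_self, Finsupp.single_apply] at hm
  by_cases h : i = m
  · exact h ▸ hi
  · exact absurd (if_neg h) hm

theorem sect_le_span {b : Module.Basis ι K R} {P : ι → Prop} :
    sect K b P ≤ Submodule.span K (b '' setOf P) := by
  intro u hu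
  rw [← b.linearCombination_repr u, Finsupp.linearCombination_apply, Finsupp.sum]
  exact Submodule.sum_mem _ fun i hi => Submodule.smul_mem _ _
    (Submodule.subset_span ⟨i, hu i (Finsupp.mem_support_iff.mp hi), rfl⟩)

theorem mul_sect {b : Module.Basis ι K R} {mulIdx : ι → ι → Option ι}
    (hmul : ∀ i j : ι, (mulIdx i j = none ∧ b i * b j = 0) ∨
      ∃ (k : ι) (c : K), mulIdx i j = some k ∧ c ≠ 0 ∧ b i * b j = c • b k)
    {P Q S : ι → Prop}
    (hPQS : ∀ i j k, mulIdx i j = some k → P i → Q j → S k)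
    {u v : R} (hu : u ∈ sect K b P) (hv : v ∈ sect K b Q) :
    u * v ∈ sect K b S := by
  have hu' := sect_le_span K hu
  have hv' := sect_le_span K hv
  clear hu hv
  induction hu' using Submodule.span_induction generalizing v with
  | mem x hx =>
    obtain ⟨i, hPi, rfl⟩ := hx
    induction hv' using Submodule.span_induction with
    | mem y hy =>
      obtain ⟨j, hQj, rfl⟩ := hy
      rcases hmul i j with ⟨_, h0⟩ | ⟨k, c, hk, hc, heq⟩
      · rw [h0]; exact zero_mem _
      · rw [heq]
        exact Submodule.smul_mem _ _ (basis_mem_sect K (hPQS i j k hk hPi hQj))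
    | zero => rw [mul_zero]; exact zero_mem _
    | add x y _ _ hx hy => rw [mul_add]; exact add_mem hx hy
    | smul c x _ hx => rw [mul_smul_comm]; exact Submodule.smul_mem _ _ hx
  | zero => rw [zero_mul]; exact zero_mem _
  | add x y hx' hy' hx hy => rw [add_mul]; exact add_mem (hx hv') (hy hv')
  | smul c x hx' hx => rw [smul_mul_assoc]; exact Submodule.smul_mem _ _ (hx hv')


/-- The degree-`n` homogeneous component of `f`. -/
noncomputable def pr (b : Module.Basis ι K R) (deg : ι → ℕ) (n : ℕ) (f : R) : R :=
  b.repr.symm ((b.repr f).filter (fun j => deg j = n))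

theorem repr_pr {b : Module.Basis ι K R} {deg : ι → ℕ} {n : ℕ} {f : R} (j : ι) :
    b.repr (pr K b deg n f) j = if deg j = n then b.repr f j else 0 := by
  rw [pr, b.repr.apply_symm_apply, Finsupp.filter_apply]

theorem pr_add {b : Module.Basis ι K R} {deg : ι → ℕ} {n : ℕ} {x y : R} :
    pr K b deg n (x + y) = pr K b deg n x + pr K b deg n y := by
  apply b.repr.injective
  ext j
  rw [map_add, Finsupp.add_apply, repr_pr, repr_pr, repr_pr, map_add, Finsupp.add_apply]
  by_cases h : deg j = n <;> simp [h]

theorem pr_smul {b : Module.Basis ι K R} {deg : ι → ℕ} {n : ℕ} {c : K} {x : R} :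
    pr K b deg n (c • x) = c • pr K b deg n x := by
  apply b.repr.injective
  ext j
  rw [map_smul, Finsupp.smul_apply, repr_pr, repr_pr, map_smul, Finsupp.smul_apply]
  by_cases h : deg j = n <;> simp [h]

theorem pr_zero {b : Module.Basis ι K R} {deg : ι → ℕ} {n : ℕ} :
    pr K b deg n (0 : R) = 0 := by
  apply b.repr.injective
  ext j
  rw [repr_pr]
  by_cases h : deg j = n <;> simp [h]

theorem pr_mem_sect {b : Module.Basis ι K R} {deg : ι → ℕ} {n : ℕ} {f : R} :
    pr K b deg n f ∈ sect K b (fun j => deg j = n) := by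
  intro m hm
  rw [repr_pr] at hm
  by_contra h
  exact hm (if_neg h)

/-- Structure of a head term. -/
theorem HT_struct {b : Module.Basis ι K R} {deg : ι → ℕ} {f h : R} {p : ℕ}
    (hrep : ∀ j, (b.repr h) j = if deg j = p then (b.repr f) j else 0)
    (hbd : ∀ j, (b.repr f) j ≠ 0 → deg j ≤ p) :
    h ∈ sect K b (fun j => deg j = p) ∧ f ∈ sect K b (fun j => deg j ≤ p) ∧
      f - h ∈ sect K b (fun j => deg j < p) := by
  refine ⟨?_, hbd, ?_⟩
  · intro m hm
    by_contra hc
    exact hm ((hrep m).trans (if_neg hc))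
  · intro m hm
    rw [map_sub, Finsupp.sub_apply, hrep m] at hm
    by_cases hd : deg m = p
    · rw [if_pos hd, sub_self] at hm; exact absurd rfl hm
    · rw [if_neg hd, sub_zero] at hm
      exact lt_of_le_of_ne (hbd m hm) hd

theorem HT_mul_left {b : Module.Basis ι K R} {mulIdx : ι → ι → Option ι} {deg : ι → ℕ}
    (hord : IsGradedMonomialOrdering K b mulIdx deg)
    {f h : R} (hHT : IsHTdeg K deg b f h) (i : ι) (hne : b i * h ≠ 0) :
    IsHTdeg K deg b (b i * f) (b i * h) := by
  obtain ⟨p, hh0, hrep, hbd⟩ := hHT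
  obtain ⟨hh, hf, hfh⟩ := HT_struct K hrep hbd
  have hbi : b i ∈ sect K b (fun j => deg j = deg i) := basis_mem_sect K rfl
  have h1 : b i * h ∈ sect K b (fun j => deg j = deg i + p) :=
    mul_sect K hord.hmul (fun i' j' k hk hi' hj' => by
      rw [hord.deg_add hk, hi', hj']) hbi hh
  have h2 : b i * f ∈ sect K b (fun j => deg j ≤ deg i + p) :=
    mul_sect K hord.hmul (fun i' j' k hk hi' hj' => by
      rw [hord.deg_add hk, hi']; omega) hbi hf
  have h3 : b i * (f - h) ∈ sect K b (fun j => deg j < deg i + p) :=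
    mul_sect K hord.hmul (fun i' j' k hk hi' hj' => by
      rw [hord.deg_add hk, hi']; omega) hbi hfh
  refine ⟨deg i + p, hne, fun j => ?_, fun j hj => h2 j hj⟩
  by_cases hdj : deg j = deg i + p
  · rw [if_pos hdj]
    have h0 : b.repr (b i * (f - h)) j = 0 := by
      by_contra hc
      exact absurd (h3 j hc) (by omega)
    have heq : b.repr (b i * f) j - b.repr (b i * h) j = 0 := by
      rw [← Finsupp.sub_apply, ← map_sub, ← mul_sub]; exact h0
    exact (sub_eq_zero.mp heq).symm
  · rw [if_neg hdj]
    by_contra hc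
    exact hdj (h1 j hc)

theorem HT_mul_right {b : Module.Basis ι K R} {mulIdx : ι → ι → Option ι} {deg : ι → ℕ}
    (hord : IsGradedMonomialOrdering K b mulIdx deg)
    {f h : R} (hHT : IsHTdeg K deg b f h) (i : ι) (hne : h * b i ≠ 0) :
    IsHTdeg K deg b (f * b i) (h * b i) := by
  obtain ⟨p, hh0, hrep, hbd⟩ := hHT
  obtain ⟨hh, hf, hfh⟩ := HT_struct K hrep hbd
  have hbi : b i ∈ sect K b (fun j => deg j = deg i) := basis_mem_sect K rfl
  have h1 : h * b i ∈ sect K b (fun j => deg j = p + deg i) :=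
    mul_sect K hord.hmul (fun i' j' k hk hi' hj' => by
      rw [hord.deg_add hk, hi', hj']) hh hbi
  have h2 : f * b i ∈ sect K b (fun j => deg j ≤ p + deg i) :=
    mul_sect K hord.hmul (fun i' j' k hk hi' hj' => by
      rw [hord.deg_add hk, hj']; omega) hf hbi
  have h3 : (f - h) * b i ∈ sect K b (fun j => deg j < p + deg i) :=
    mul_sect K hord.hmul (fun i' j' k hk hi' hj' => by
      rw [hord.deg_add hk, hj']; omega) hfh hbi
  refine ⟨p + deg i, hne, fun j => ?_, fun j hj => h2 j hj⟩
  by_cases hdj : deg j = p + deg i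
  · rw [if_pos hdj]
    have h0 : b.repr ((f - h) * b i) j = 0 := by
      by_contra hc
      exact absurd (h3 j hc) (by omega)
    have heq : b.repr (f * b i) j - b.repr (h * b i) j = 0 := by
      rw [← Finsupp.sub_apply, ← map_sub, ← sub_mul]; exact h0
    exact (sub_eq_zero.mp heq).symm
  · rw [if_neg hdj]
    by_contra hc
    exact hdj (h1 j hc)

theorem exists_HT {b : Module.Basis ι K R} {mulIdx : ι → ι → Option ι} {deg : ι → ℕ}
    (hord : IsGradedMonomialOrdering K b mulIdx deg)
    {f : R} {i : ι} (hLM : IsLM K b f i) :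
    IsHTdeg K deg b f (pr K b deg (deg i) f) ∧ IsLM K b (pr K b deg (deg i) f) i := by
  have hbd : ∀ j, b.repr f j ≠ 0 → deg j ≤ deg i := by
    intro j hj
    by_contra hc
    push_neg at hc
    exact absurd (hLM.2 j hj) (not_le.mpr (hord.graded hc))
  have hri : b.repr (pr K b deg (deg i) f) i = b.repr f i := by
    rw [repr_pr, if_pos rfl]
  have hne : pr K b deg (deg i) f ≠ 0 := by
    intro h0
    apply hLM.1
    rw [← hri, h0, map_zero]
    rfl
  refine ⟨⟨deg i, hne, fun j => repr_pr K j, hbd⟩, ⟨by rw [hri]; exact hLM.1, fun j hj => ?_⟩⟩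
  apply hLM.2 j
  intro hc
  rw [repr_pr, hc] at hj
  simp at hj

theorem LM_of_HT {b : Module.Basis ι K R} {mulIdx : ι → ι → Option ι} {deg : ι → ℕ}
    (hord : IsGradedMonomialOrdering K b mulIdx deg)
    {f h : R} {i : ι} (hHT : IsHTdeg K deg b f h) (hLM : IsLM K b h i) :
    IsLM K b f i := by
  obtain ⟨p, hh0, hrep, hbd⟩ := hHT
  have hdi : deg i = p ∧ b.repr f i ≠ 0 := by
    have h1 := hLM.1
    rw [hrep i] at h1
    by_cases hd : deg i = p
    · exact ⟨hd, by rwa [if_pos hd] at h1⟩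
    · rw [if_neg hd] at h1; exact absurd rfl h1
  refine ⟨hdi.2, fun j hj => ?_⟩
  rcases lt_or_eq_of_le (hbd j hj) with hlt | heq
  · exact le_of_lt (hord.graded (by rw [hdi.1]; exact hlt))
  · exact hLM.2 j (by rw [hrep j, if_pos heq]; exact hj)

theorem LMset_HTset {b : Module.Basis ι K R} {mulIdx : ι → ι → Option ι} {deg : ι → ℕ}
    (hord : IsGradedMonomialOrdering K b mulIdx deg) (S : Set R) :
    LMset K b (HTset K deg b S) = LMset K b S := by
  ext m
  constructor
  · rintro ⟨h, ⟨f, hfS, hHT⟩, i, hLM, rfl⟩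
    exact ⟨f, hfS, i, LM_of_HT K hord hHT hLM, rfl⟩
  · rintro ⟨f, hfS, i, hLM, rfl⟩
    obtain ⟨hHT, hLM'⟩ := exists_HT K hord hLM
    exact ⟨pr K b deg (deg i) f, ⟨f, hfS, hHT⟩, i, hLM', rfl⟩

theorem subset_tss (S : Set R) : S ⊆ (twoSidedSpan K R S : Set R) :=
  fun _ hx => Submodule.mem_sInf.mpr fun _ hJ => hJ.1 hx

theorem tss_le {S : Set R} {N : Submodule K R} (hS : S ⊆ N)
    (hcl : ∀ r : R, ∀ x ∈ N, r * x ∈ N ∧ x * r ∈ N) : twoSidedSpan K R S ≤ N :=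
  sInf_le ⟨hS, hcl⟩

theorem span_HT_closed {b : Module.Basis ι K R} {mulIdx : ι → ι → Option ι} {deg : ι → ℕ}
    (hord : IsGradedMonomialOrdering K b mulIdx deg) {I : Submodule K R}
    (hI : ∀ r : R, ∀ x ∈ I, r * x ∈ I ∧ x * r ∈ I) :
    ∀ r : R, ∀ x ∈ Submodule.span K (HTset K deg b (I : Set R)),
      r * x ∈ Submodule.span K (HTset K deg b (I : Set R)) ∧
      x * r ∈ Submodule.span K (HTset K deg b (I : Set R)) := by
  set M := Submodule.span K (HTset K deg b (I : Set R)) with hM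
  have key : ∀ x ∈ M, ∀ r : R, r * x ∈ M ∧ x * r ∈ M := by
    intro x hx
    induction hx using Submodule.span_induction with
    | mem h hh =>
      obtain ⟨f, hfI, hHT⟩ := hh
      intro r
      constructor
      · let N : Submodule K R :=
          { carrier := {r | r * h ∈ M}
            add_mem' := by
              intro a c ha hc
              show (a + c) * h ∈ M
              rw [add_mul]; exact add_mem ha hc
            zero_mem' := by
              show (0 : R) * h ∈ M
              rw [zero_mul]; exact zero_mem _
            smul_mem' := by
              intro c a ha
              show (c • a) * h ∈ M
              rw [smul_mul_assoc]; exact Submodule.smul_mem _ _ ha }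
        have hNtop : ⊤ ≤ N := by
          rw [← b.span_eq, Submodule.span_le]
          rintro _ ⟨i, rfl⟩
          show b i * h ∈ M
          by_cases h0 : b i * h = 0
          · rw [h0]; exact zero_mem _
          · exact Submodule.subset_span
              ⟨b i * f, (hI (b i) f hfI).1, HT_mul_left K hord hHT i h0⟩
        exact hNtop (Submodule.mem_top (x := r))
      · let N : Submodule K R :=
          { carrier := {r | h * r ∈ M}
            add_mem' := by
              intro a c ha hc
              show h * (a + c) ∈ M
              rw [mul_add]; exact add_mem ha hc
            zero_mem' := by
              show h * (0 : R) ∈ M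
              rw [mul_zero]; exact zero_mem _
            smul_mem' := by
              intro c a ha
              show h * (c • a) ∈ M
              rw [mul_smul_comm]; exact Submodule.smul_mem _ _ ha }
        have hNtop : ⊤ ≤ N := by
          rw [← b.span_eq, Submodule.span_le]
          rintro _ ⟨i, rfl⟩
          show h * b i ∈ M
          by_cases h0 : h * b i = 0
          · rw [h0]; exact zero_mem _
          · exact Submodule.subset_span
              ⟨f * b i, (hI (b i) f hfI).2, HT_mul_right K hord hHT i h0⟩
        exact hNtop (Submodule.mem_top (x := r))
    | zero =>
      intro r
      constructor
      · rw [mul_zero]; exact zero_mem _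
      · rw [zero_mul]; exact zero_mem _
    | add x y hx' hy' hx hy =>
      intro r
      exact ⟨by rw [mul_add]; exact add_mem (hx r).1 (hy r).1,
             by rw [add_mul]; exact add_mem (hx r).2 (hy r).2⟩
    | smul c x hx' hx =>
      intro r
      exact ⟨by rw [mul_smul_comm]; exact Submodule.smul_mem _ _ (hx r).1,
             by rw [smul_mul_assoc]; exact Submodule.smul_mem _ _ (hx r).2⟩
  exact fun r x hx => key x hx r

theorem LM_J_eq {b : Module.Basis ι K R} {mulIdx : ι → ι → Option ι} {deg : ι → ℕ}
    (hord : IsGradedMonomialOrdering K b mulIdx deg) {I : Submodule K R}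
    (hI : ∀ r : R, ∀ x ∈ I, r * x ∈ I ∧ x * r ∈ I) :
    LMset K b ((twoSidedSpan K R (HTset K deg b (I : Set R)) : Submodule K R) : Set R)
      = LMset K b (I : Set R) := by
  have hJM : twoSidedSpan K R (HTset K deg b (I : Set R)) ≤
      Submodule.span K (HTset K deg b (I : Set R)) :=
    tss_le K Submodule.subset_span (span_HT_closed K hord hI)
  have C : ∀ g ∈ Submodule.span K (HTset K deg b (I : Set R)), ∀ n : ℕ,
      ∃ f ∈ I, f ∈ sect K b (fun j => deg j ≤ n) ∧ pr K b deg n f = pr K b deg n g := by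
    intro g hg
    induction hg using Submodule.span_induction with
    | mem h hh =>
      obtain ⟨f₀, hf₀, p₀, hne, hrep, hbd⟩ := hh
      intro n
      by_cases hn : n = p₀
      · subst hn
        refine ⟨f₀, hf₀, hbd, ?_⟩
        apply b.repr.injective
        ext j
        rw [repr_pr, repr_pr]
        by_cases hd : deg j = n
        · rw [if_pos hd, if_pos hd, hrep j, if_pos hd]
        · rw [if_neg hd, if_neg hd]
      · refine ⟨0, zero_mem _, zero_mem _, ?_⟩
        have hzero : pr K b deg n h = 0 := by
          apply b.repr.injective
          ext j
          rw [repr_pr, map_zero]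
          by_cases hd : deg j = n
          · rw [if_pos hd, hrep j, if_neg (by omega)]
            simp
          · rw [if_neg hd]
            simp
        rw [pr_zero, hzero]
    | zero => intro n; exact ⟨0, zero_mem _, zero_mem _, rfl⟩
    | add x y hx' hy' hx hy =>
      intro n
      obtain ⟨f₁, hf₁, hs₁, he₁⟩ := hx n
      obtain ⟨f₂, hf₂, hs₂, he₂⟩ := hy n
      exact ⟨f₁ + f₂, add_mem hf₁ hf₂, add_mem hs₁ hs₂, by rw [pr_add, pr_add, he₁, he₂]⟩
    | smul c x hx' hx =>
      intro n
      obtain ⟨f₁, hf₁, hs₁, he₁⟩ := hx n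
      exact ⟨c • f₁, Submodule.smul_mem _ _ hf₁, Submodule.smul_mem _ _ hs₁,
        by rw [pr_smul, pr_smul, he₁]⟩
  ext m
  constructor
  · rintro ⟨g, hgJ, i₀, hLMg, rfl⟩
    obtain ⟨f, hfI, hfs, hfe⟩ := C g (hJM hgJ) (deg i₀)
    have hri : b.repr f i₀ = b.repr g i₀ := by
      have h1 : b.repr (pr K b deg (deg i₀) f) i₀ = b.repr (pr K b deg (deg i₀) g) i₀ := by
        rw [hfe]
      rwa [repr_pr, repr_pr, if_pos rfl, if_pos rfl] at h1
    refine ⟨f, hfI, i₀, ⟨by rw [hri]; exact hLMg.1, fun j hj => ?_⟩, rfl⟩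
    rcases lt_or_eq_of_le (hfs j hj) with hlt | heq
    · exact le_of_lt (hord.graded hlt)
    · have hrj : b.repr f j = b.repr g j := by
        have h1 : b.repr (pr K b deg (deg i₀) f) j = b.repr (pr K b deg (deg i₀) g) j := by
          rw [hfe]
        rwa [repr_pr, repr_pr, if_pos heq, if_pos heq] at h1
      exact hLMg.2 j (hrj ▸ hj)
  · rintro ⟨f, hfI, i, hLM, rfl⟩
    obtain ⟨hHT, hLM'⟩ := exists_HT K hord hLM
    exact ⟨pr K b deg (deg i) f, subset_tss K _ ⟨f, hfI, hHT⟩, i, hLM', rfl⟩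


theorem statement17
    (b : Module.Basis ι K R) (mulIdx : ι → ι → Option ι) (deg : ι → ℕ)
    (hord : IsGradedMonomialOrdering K b mulIdx deg)
    -- I an ideal of R
    (I : Submodule K R) (hI : ∀ r : R, ∀ x ∈ I, r * x ∈ I ∧ x * r ∈ I) :
    -- (i) LM(J) = LM(I) for J = ⟨HT(I)⟩
    LMset K b ((twoSidedSpan K R (HTset K deg b (I : Set R)) : Submodule K R) : Set R)
      = LMset K b (I : Set R) ∧
    -- (ii)
    (∀ G : Set R, G ⊆ (I : Set R) → twoSidedSpan K R G = I →
      (IsGroebnerBasis K b I G ↔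
        IsGroebnerBasis K b (twoSidedSpan K R (HTset K deg b (I : Set R)))
          (HTset K deg b G))) := by
  refine ⟨LM_J_eq K hord hI, fun G hGI hGsp => ?_⟩
  unfold IsGroebnerBasis
  rw [LM_J_eq K hord hI, LMset_HTset K hord]
end

section
/- Let ≺ be a monomial ordering on B and I an ideal of R. Then R = I ⊕ K-span(B∖LM(I)) = ⟨LM(I)⟩ ⊕ K-span(B∖LM(I)) as K-vector spaces. Consequently: (i) the image of the set B∖LM(I) forms a K-basis of A = R/I and also a K-basis of R/⟨LM(I)⟩ (and, when ≺ is a graded monomial ordering, a K-basis of R/⟨HT(I)⟩); (ii) A = R/I is finite dimensional over K if and only if R/⟨LM(I)⟩ is finite dimensional over K, and in that case dim_K R/I = dim_K R/⟨LM(I)⟩ = |B∖LM(I)|. -/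
/-!
Common setting: K a field, R a K-algebra with a skew multiplicative K-basis
B = {b i : i ∈ ι} (for u, v ∈ B either uv = 0 or uv = λw with λ ∈ K*, w ∈ B;
this is encoded by the partial multiplication `mulIdx` on indices), ℕ-graded
by the length function `deg` (R_p is spanned by the monomials of length p,
and lengths are additive for nonzero products).  A monomial ordering on B is
a well-order on ι compatible with the partial multiplication (axioms
(Mo1)-(Mo3)); a graded monomial ordering moreover refines the length function.
`IsLM b f i` says b i = LM(f); `IsHTdeg deg b f h` says h = HT(f), the nonzero
homogeneous component of f of highest degree.
-/

open Function

universe u v w x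

variable (K : Type u) [Field K]

variable {R : Type w} [Ring R] [Algebra K R] {ι : Type v} [LinearOrder ι]

/-- The axioms of a (not necessarily graded) monomial ordering on the skew
multiplicative basis `b` (with index multiplication `mulIdx`). -/
structure IsMonomialOrdering (b : Module.Basis ι K R) (mulIdx : ι → ι → Option ι) : Prop where
  hmul : ∀ i j : ι, (mulIdx i j = none ∧ b i * b j = 0) ∨
    ∃ (k : ι) (c : K), mulIdx i j = some k ∧ c ≠ 0 ∧ b i * b j = c • b k
  mo1 : ∀ {i j k p q : ι}, i < j → mulIdx i k = some p → mulIdx j k = some q → p < q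
  mo2 : ∀ {i j k p q : ι}, i < j → mulIdx k i = some p → mulIdx k j = some q → p < q
  mo3 : ∀ {i j k : ι}, mulIdx i j = some k → i ≤ k ∧ j ≤ k
  wf : WellFoundedLT ι

/-!
STATEMENT 19.  ≺ a monomial ordering on B, I an ideal of R.  Then
R = I ⊕ K-span(B∖LM(I)) = ⟨LM(I)⟩ ⊕ K-span(B∖LM(I)) as K-vector spaces.
Consequently (i) the image of B∖LM(I) is a K-basis of A = R/I and of
R/⟨LM(I)⟩, and (when ≺ is a graded monomial ordering) of R/⟨HT(I)⟩;
(ii) R/I is finite dimensional over K iff R/⟨LM(I)⟩ is, in which case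
dim_K R/I = dim_K R/⟨LM(I)⟩ = |B∖LM(I)|.
(Quotients are presented by surjective K-algebra maps with the indicated
kernels; `NB = {i | b i ∉ LM(I)}` indexes B∖LM(I).)
-/


section Statement19Aux

set_option linter.unusedSectionVars false

variable {K}
variable (b : Module.Basis ι K R)

lemma basis_sum_repr (x : R) : ∑ j ∈ (b.repr x).support, (b.repr x) j • b j = x := by
  conv_rhs => rw [← b.linearCombination_repr x]
  rw [Finsupp.linearCombination_apply, Finsupp.sum]

lemma repr_basis_mul_apply (u : ι) (x : R) (q : ι) :
    (b.repr (b u * x)) q = ∑ j ∈ (b.repr x).support, (b.repr x) j * (b.repr (b u * b j)) q := by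
  conv_lhs => rw [← basis_sum_repr b x]
  rw [Finset.mul_sum]
  simp_rw [mul_smul_comm, map_sum, map_smul, Finsupp.finset_sum_apply, Finsupp.smul_apply,
    smul_eq_mul]

lemma repr_mul_basis_apply (u : ι) (x : R) (q : ι) :
    (b.repr (x * b u)) q = ∑ j ∈ (b.repr x).support, (b.repr x) j * (b.repr (b j * b u)) q := by
  conv_lhs => rw [← basis_sum_repr b x]
  rw [Finset.sum_mul]
  simp_rw [smul_mul_assoc, map_sum, map_smul, Finsupp.finset_sum_apply, Finsupp.smul_apply,
    smul_eq_mul]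

lemma exists_isLM {x : R} (hx : x ≠ 0) : ∃ i, IsLM K b x i := by
  have hne : (b.repr x).support.Nonempty := by
    rw [Finsupp.support_nonempty_iff]
    simpa using hx
  refine ⟨(b.repr x).support.max' hne, ?_, fun j hj => ?_⟩
  · exact Finsupp.mem_support_iff.mp ((b.repr x).support.max'_mem hne)
  · exact Finset.le_max' _ j (Finsupp.mem_support_iff.mpr hj)

lemma isLM_basis (i : ι) : IsLM K b (b i) i := by
  constructor <;> simp [b.repr_self, Finsupp.single_apply_ne_zero]

lemma isLM_unique {x : R} {i i' : ι} (h : IsLM K b x i) (h' : IsLM K b x i') : i = i' :=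
  le_antisymm (h'.2 i h.1) (h.2 i' h'.1)

/-- generic ⊓ = ⊥ lemma -/
lemma inf_eq_bot_of_lm (N : Set ι) (J : Submodule K R)
    (h : ∀ g ∈ J, g ≠ 0 → ∃ i, IsLM K b g i ∧ i ∉ N) :
    Submodule.span K (b '' N) ⊓ J = ⊥ := by
  rw [eq_bot_iff]
  rintro g ⟨hg1, hg2⟩
  simp only [Submodule.mem_bot]
  by_contra hg0
  obtain ⟨i, hi, hiN⟩ := h g hg2 hg0
  exact hiN (b.mem_span_image.mp hg1 (Finsupp.mem_support_iff.mpr hi.1))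

/-- generic ⊔ = ⊤ lemma, by well-founded induction on the leading monomial -/
lemma sup_eq_top_of_lm (hwf : WellFoundedLT ι) (N : Set ι) (J : Submodule K R)
    (h : ∀ i, i ∉ N → ∃ h ∈ J, IsLM K b h i) :
    Submodule.span K (b '' N) ⊔ J = ⊤ := by
  rw [eq_top_iff]
  have main : ∀ i : ι, ∀ x : R, IsLM K b x i → x ∈ Submodule.span K (b '' N) ⊔ J := by
    intro i
    induction i using WellFoundedLT.induction with
    | ind i IH =>
      intro x hx
      -- get h with IsLM h i, h ∈ sup
      have : ∃ hh ∈ Submodule.span K (b '' N) ⊔ J, IsLM K b hh i := by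
        by_cases hiN : i ∈ N
        · exact ⟨b i, Submodule.mem_sup_left (Submodule.subset_span ⟨i, hiN, rfl⟩),
            isLM_basis b i⟩
        · obtain ⟨hh, hhJ, hhi⟩ := h i hiN
          exact ⟨hh, Submodule.mem_sup_right hhJ, hhi⟩
      obtain ⟨hh, hhmem, hhi⟩ := this
      set c : K := (b.repr x) i / (b.repr hh) i with hc
      set y : R := x - c • hh with hy
      have hyi : (b.repr y) i = 0 := by
        simp only [hy, map_sub, map_smul, Finsupp.sub_apply, Finsupp.smul_apply, smul_eq_mul, hc]
        rw [div_mul_cancel₀ _ hhi.1, sub_self]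
      have hysupp : ∀ j, (b.repr y) j ≠ 0 → j < i := by
        intro j hj
        have hle : j ≤ i := by
          simp only [hy, map_sub, Finsupp.sub_apply, map_smul, Finsupp.smul_apply,
            smul_eq_mul] at hj
          rcases ne_or_eq ((b.repr x) j) 0 with h1 | h1
          · exact hx.2 j h1
          · apply hhi.2 j
            intro h2
            rw [h1, h2, mul_zero, sub_zero] at hj
            exact hj rfl
        rcases hle.lt_or_eq with h1 | h1
        · exact h1
        · exact absurd (h1 ▸ hj) (by simp [hyi])
      have hxy : x = y + c • hh := by rw [hy]; abel
      rcases eq_or_ne y 0 with h0 | h0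
      · rw [hxy, h0, zero_add]
        exact Submodule.smul_mem _ c hhmem
      · obtain ⟨m, hm⟩ := exists_isLM b h0
        have hmi : m < i := hysupp m hm.1
        rw [hxy]
        exact add_mem (IH m hmi y hm) (Submodule.smul_mem _ c hhmem)
  intro x _
  rcases eq_or_ne x 0 with h0 | h0
  · simp [h0]
  · obtain ⟨i, hi⟩ := exists_isLM b h0
    exact main i x hi

section Mul

variable {mulIdx : ι → ι → Option ι}
variable (hmul : ∀ i j : ι, (mulIdx i j = none ∧ b i * b j = 0) ∨
    ∃ (k : ι) (c : K), mulIdx i j = some k ∧ c ≠ 0 ∧ b i * b j = c • b k)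

include hmul

lemma mulIdx_of_repr_ne_zero {u j q : ι} (h : (b.repr (b u * b j)) q ≠ 0) :
    mulIdx u j = some q := by
  rcases hmul u j with ⟨_, h0⟩ | ⟨k, c, hk, hc, he⟩
  · rw [h0] at h; simp at h
  · rw [he] at h
    simp only [map_smul, b.repr_self, Finsupp.smul_apply, smul_eq_mul] at h
    rcases eq_or_ne q k with rfl | hqk
    · exact hk
    · rw [Finsupp.single_apply, if_neg (fun hh => hqk hh.symm), mul_zero] at h
      exact absurd rfl h

lemma repr_ne_zero_of_mulIdx {u j k : ι} (h : mulIdx u j = some k) :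
    (b.repr (b u * b j)) k ≠ 0 := by
  rcases hmul u j with ⟨h0, _⟩ | ⟨k', c, hk, hc, he⟩
  · rw [h0] at h; exact absurd h (by simp)
  · rw [hk] at h
    injection h with h; subst h
    rw [he]
    simp [b.repr_self, Finsupp.single_apply, hc]

omit hmul

variable (mo1 : ∀ {i j k p q : ι}, i < j → mulIdx i k = some p → mulIdx j k = some q → p < q)
variable (mo2 : ∀ {i j k p q : ι}, i < j → mulIdx k i = some p → mulIdx k j = some q → p < q)

include hmul in
lemma supp_basis_mul {u : ι} {x : R} {q : ι} (h : (b.repr (b u * x)) q ≠ 0) :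
    ∃ j, (b.repr x) j ≠ 0 ∧ mulIdx u j = some q := by
  rw [repr_basis_mul_apply] at h
  obtain ⟨j, hj, hne⟩ := Finset.exists_ne_zero_of_sum_ne_zero h
  exact ⟨j, Finsupp.mem_support_iff.mp hj,
    mulIdx_of_repr_ne_zero b hmul (right_ne_zero_of_mul hne)⟩

include hmul in
lemma supp_mul_basis {u : ι} {x : R} {q : ι} (h : (b.repr (x * b u)) q ≠ 0) :
    ∃ j, (b.repr x) j ≠ 0 ∧ mulIdx j u = some q := by
  rw [repr_mul_basis_apply] at h
  obtain ⟨j, hj, hne⟩ := Finset.exists_ne_zero_of_sum_ne_zero h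
  exact ⟨j, Finsupp.mem_support_iff.mp hj,
    mulIdx_of_repr_ne_zero b hmul (right_ne_zero_of_mul hne)⟩

include hmul mo2 in
lemma isLM_basis_mul {u i m : ι} {f : R} (hf : IsLM K b f i) (hm : mulIdx u i = some m) :
    IsLM K b (b u * f) m := by
  constructor
  · rw [repr_basis_mul_apply]
    rw [Finset.sum_eq_single i]
    · exact mul_ne_zero hf.1 (repr_ne_zero_of_mulIdx b hmul hm)
    · intro j hj hji
      rcases eq_or_ne ((b.repr (b u * b j)) m) 0 with h0 | h0
      · rw [h0, mul_zero]
      · have hj' := mulIdx_of_repr_ne_zero b hmul h0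
        have : j < i := (hf.2 j (Finsupp.mem_support_iff.mp hj)).lt_of_ne hji
        exact absurd (mo2 this hj' hm) (lt_irrefl m)
    · intro hi; exact absurd (Finsupp.mem_support_iff.mpr hf.1) hi
  · intro q hq
    obtain ⟨j, hj, hjq⟩ := supp_basis_mul b hmul hq
    rcases (hf.2 j hj).lt_or_eq with hlt | rfl
    · exact (mo2 hlt hjq hm).le
    · rw [hjq] at hm; injection hm with hm; exact hm.le

include hmul mo1 in
lemma isLM_mul_basis {u i m : ι} {f : R} (hf : IsLM K b f i) (hm : mulIdx i u = some m) :
    IsLM K b (f * b u) m := by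
  constructor
  · rw [repr_mul_basis_apply]
    rw [Finset.sum_eq_single i]
    · exact mul_ne_zero hf.1 (repr_ne_zero_of_mulIdx b hmul hm)
    · intro j hj hji
      rcases eq_or_ne ((b.repr (b j * b u)) m) 0 with h0 | h0
      · rw [h0, mul_zero]
      · have hj' := mulIdx_of_repr_ne_zero b hmul h0
        have : j < i := (hf.2 j (Finsupp.mem_support_iff.mp hj)).lt_of_ne hji
        exact absurd (mo1 this hj' hm) (lt_irrefl m)
    · intro hi; exact absurd (Finsupp.mem_support_iff.mpr hf.1) hi
  · intro q hq
    obtain ⟨j, hj, hjq⟩ := supp_mul_basis b hmul hq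
    rcases (hf.2 j hj).lt_or_eq with hlt | rfl
    · exact (mo1 hlt hjq hm).le
    · rw [hjq] at hm; injection hm with hm; exact hm.le

end Mul

section TSS

variable (K)
lemma subset_twoSidedSpan (S : Set R) : S ⊆ twoSidedSpan K R S := fun x hx =>
  Submodule.mem_sInf.mpr fun _ hJ => hJ.1 hx

lemma twoSidedSpan_closed (S : Set R) (r : R) {x : R} (hx : x ∈ twoSidedSpan K R S) :
    r * x ∈ twoSidedSpan K R S ∧ x * r ∈ twoSidedSpan K R S :=
  ⟨Submodule.mem_sInf.mpr fun J hJ => (hJ.2 r x (Submodule.mem_sInf.mp hx J hJ)).1,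
   Submodule.mem_sInf.mpr fun J hJ => (hJ.2 r x (Submodule.mem_sInf.mp hx J hJ)).2⟩

lemma twoSidedSpan_le {S : Set R} {J : Submodule K R} (h1 : S ⊆ J)
    (h2 : ∀ r : R, ∀ x ∈ J, r * x ∈ J ∧ x * r ∈ J) : twoSidedSpan K R S ≤ J :=
  sInf_le ⟨h1, h2⟩
variable {K}

end TSS

section LMIdeal

variable {mulIdx : ι → ι → Option ι}
variable (hmul : ∀ i j : ι, (mulIdx i j = none ∧ b i * b j = 0) ∨
    ∃ (k : ι) (c : K), mulIdx i j = some k ∧ c ≠ 0 ∧ b i * b j = c • b k)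
variable (mo1 : ∀ {i j k p q : ι}, i < j → mulIdx i k = some p → mulIdx j k = some q → p < q)
variable (mo2 : ∀ {i j k p q : ι}, i < j → mulIdx k i = some p → mulIdx k j = some q → p < q)
variable {I : Submodule K R} (hI : ∀ r : R, ∀ x ∈ I, r * x ∈ I ∧ x * r ∈ I)

include hmul mo1 mo2 hI

/-- L is closed under left multiplication of indices -/
lemma lset_mul_left {i m u : ι} (hi : i ∈ {i : ι | ∃ f ∈ (I : Set R), IsLM K b f i}) (hm : mulIdx u i = some m) : m ∈ {i : ι | ∃ f ∈ (I : Set R), IsLM K b f i} := by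
  obtain ⟨f, hf, hfi⟩ := hi
  exact ⟨b u * f, (hI (b u) f hf).1, isLM_basis_mul b hmul @mo2 hfi hm⟩

lemma lset_mul_right {i m u : ι} (hi : i ∈ {i : ι | ∃ f ∈ (I : Set R), IsLM K b f i}) (hm : mulIdx i u = some m) : m ∈ {i : ι | ∃ f ∈ (I : Set R), IsLM K b f i} := by
  obtain ⟨f, hf, hfi⟩ := hi
  exact ⟨f * b u, (hI (b u) f hf).2, isLM_mul_basis b hmul @mo1 hfi hm⟩

/-- span of basis elements indexed by an `mulIdx`-stable set is multiplication-stable -/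
lemma span_L_mul_closed (r : R) {x : R} (hx : x ∈ Submodule.span K (b '' {i : ι | ∃ f ∈ (I : Set R), IsLM K b f i})) :
    r * x ∈ Submodule.span K (b '' {i : ι | ∃ f ∈ (I : Set R), IsLM K b f i}) ∧ x * r ∈ Submodule.span K (b '' {i : ι | ∃ f ∈ (I : Set R), IsLM K b f i}) := by
  constructor
  · induction hx using Submodule.span_induction with
    | mem y hy =>
      obtain ⟨j, hj, rfl⟩ := hy
      rw [← basis_sum_repr b r, Finset.sum_mul]
      refine Submodule.sum_mem _ fun k _ => ?_
      rw [smul_mul_assoc]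
      refine Submodule.smul_mem _ _ ?_
      rcases hmul k j with ⟨_, h0⟩ | ⟨m, c, hm, hc, he⟩
      · rw [h0]; exact Submodule.zero_mem _
      · rw [he]
        exact Submodule.smul_mem _ _ (Submodule.subset_span
          ⟨m, lset_mul_left b hmul @mo1 @mo2 hI hj hm, rfl⟩)
    | zero => rw [mul_zero]; exact Submodule.zero_mem _
    | add y z _ _ hy hz => rw [mul_add]; exact Submodule.add_mem _ hy hz
    | smul c y _ hy => rw [mul_smul_comm]; exact Submodule.smul_mem _ _ hy
  · induction hx using Submodule.span_induction with
    | mem y hy =>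
      obtain ⟨j, hj, rfl⟩ := hy
      rw [← basis_sum_repr b r, Finset.mul_sum]
      refine Submodule.sum_mem _ fun k _ => ?_
      rw [mul_smul_comm]
      refine Submodule.smul_mem _ _ ?_
      rcases hmul j k with ⟨_, h0⟩ | ⟨m, c, hm, hc, he⟩
      · rw [h0]; exact Submodule.zero_mem _
      · rw [he]
        exact Submodule.smul_mem _ _ (Submodule.subset_span
          ⟨m, lset_mul_right b hmul @mo1 @mo2 hI hj hm, rfl⟩)
    | zero => rw [zero_mul]; exact Submodule.zero_mem _
    | add y z _ _ hy hz => rw [add_mul]; exact Submodule.add_mem _ hy hz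
    | smul c y _ hy => rw [smul_mul_assoc]; exact Submodule.smul_mem _ _ hy

lemma twoSidedSpan_LMset_eq :
    twoSidedSpan K R (LMset K b (I : Set R)) = Submodule.span K (b '' {i : ι | ∃ f ∈ (I : Set R), IsLM K b f i}) := by
  apply le_antisymm
  · refine twoSidedSpan_le K ?_ (fun r x hx => span_L_mul_closed b hmul @mo1 @mo2 hI r hx)
    rintro m ⟨f, hf, i, hfi, rfl⟩
    exact Submodule.subset_span ⟨i, ⟨f, hf, hfi⟩, rfl⟩
  · rw [Submodule.span_le]
    rintro m ⟨i, ⟨f, hf, hfi⟩, rfl⟩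
    exact subset_twoSidedSpan K _ ⟨f, hf, i, hfi, rfl⟩

end LMIdeal

section Sandwich

variable {mulIdx : ι → ι → Option ι}
variable (S : Set R)

lemma twoSidedSpan_le_span_sandwich :
    twoSidedSpan K R S ≤ Submodule.span K {y : R | ∃ u v : ι, ∃ h ∈ S, y = b u * h * b v} := by
  set J := Submodule.span K {y : R | ∃ u v : ι, ∃ h ∈ S, y = b u * h * b v} with hJ
  have claim : ∀ h ∈ S, ∀ r s : R, r * h * s ∈ J := by
    intro h hh r s
    rw [← basis_sum_repr b r, Finset.sum_mul, Finset.sum_mul]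
    refine Submodule.sum_mem _ fun k _ => ?_
    rw [smul_mul_assoc, smul_mul_assoc]
    refine Submodule.smul_mem _ _ ?_
    rw [← basis_sum_repr b s, Finset.mul_sum]
    refine Submodule.sum_mem _ fun l _ => ?_
    rw [mul_smul_comm]
    exact Submodule.smul_mem _ _ (Submodule.subset_span ⟨k, l, h, hh, rfl⟩)
  refine twoSidedSpan_le K ?_ ?_
  · intro x hx
    have := claim x hx 1 1
    rwa [one_mul, mul_one] at this
  · intro r x hx
    constructor
    · induction hx using Submodule.span_induction with
      | mem y hy =>
        obtain ⟨u, v, h, hh, rfl⟩ := hy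
        have : r * (b u * h * b v) = (r * b u) * h * b v := by simp [mul_assoc]
        rw [this]
        exact claim h hh _ _
      | zero => rw [mul_zero]; exact Submodule.zero_mem _
      | add y z _ _ hy hz => rw [mul_add]; exact Submodule.add_mem _ hy hz
      | smul c y _ hy => rw [mul_smul_comm]; exact Submodule.smul_mem _ _ hy
    · induction hx using Submodule.span_induction with
      | mem y hy =>
        obtain ⟨u, v, h, hh, rfl⟩ := hy
        have : (b u * h * b v) * r = b u * h * (b v * r) := by simp [mul_assoc]
        rw [this]
        exact claim h hh _ _
      | zero => rw [zero_mul]; exact Submodule.zero_mem _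
      | add y z _ _ hy hz => rw [add_mul]; exact Submodule.add_mem _ hy hz
      | smul c y _ hy => rw [smul_mul_assoc]; exact Submodule.smul_mem _ _ hy

end Sandwich

section HT

variable {mulIdx : ι → ι → Option ι} (deg : ι → ℕ)
variable (hmul : ∀ i j : ι, (mulIdx i j = none ∧ b i * b j = 0) ∨
    ∃ (k : ι) (c : K), mulIdx i j = some k ∧ c ≠ 0 ∧ b i * b j = c • b k)
variable (deg_add : ∀ {i j k : ι}, mulIdx i j = some k → deg k = deg i + deg j)
variable (graded : ∀ {i j : ι}, deg i < deg j → i < j)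

include hmul deg_add in
lemma supp_sandwich {u v : ι} {x : R} {q : ι} (h : (b.repr (b u * x * b v)) q ≠ 0) :
    ∃ j, (b.repr x) j ≠ 0 ∧ deg q = deg u + deg j + deg v := by
  obtain ⟨j', hj', hq⟩ := supp_mul_basis b hmul h
  obtain ⟨j, hj, hj'2⟩ := supp_basis_mul b hmul hj'
  exact ⟨j, hj, by rw [deg_add hq, deg_add hj'2]⟩

include graded in
/-- construction of the head term of `f`, given its leading monomial -/
lemma exists_HT_s19 {f : R} {i : ι} (hf : IsLM K b f i) :
    ∃ h : R, IsHTdeg K deg b f h ∧ IsLM K b h i ∧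
      (∀ j, (b.repr h) j = if deg j = deg i then (b.repr f) j else 0) := by
  classical
  set h : R := ∑ j ∈ (b.repr f).support.filter (fun j => deg j = deg i),
      (b.repr f) j • b j with hh
  have hrepr : ∀ j, (b.repr h) j = if deg j = deg i then (b.repr f) j else 0 := by
    intro j
    rw [hh, map_sum]
    simp_rw [map_smul, b.repr_self]
    rw [Finsupp.finset_sum_apply]
    simp_rw [Finsupp.smul_apply, Finsupp.single_apply, smul_eq_mul, mul_ite, mul_one, mul_zero]
    rw [Finset.sum_ite_eq' _ j]
    by_cases h1 : deg j = deg i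
    · by_cases h2 : (b.repr f) j = 0
      · simp [h1, h2]
      · simp [Finset.mem_filter, Finsupp.mem_support_iff, h1, h2]
    · simp [Finset.mem_filter, h1]
  have hdegle : ∀ j, (b.repr f) j ≠ 0 → deg j ≤ deg i := by
    intro j hj
    by_contra hgt
    exact absurd (graded (lt_of_not_ge hgt)) (not_lt.mpr (hf.2 j hj))
  have hhi : (b.repr h) i = (b.repr f) i := by rw [hrepr]; simp
  have hne : h ≠ 0 := fun h0 => hf.1 (by rw [← hhi, h0, map_zero]; rfl)
  refine ⟨h, ⟨deg i, hne, hrepr, hdegle⟩, ⟨by rw [hhi]; exact hf.1, fun j hj => ?_⟩, hrepr⟩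
  rw [hrepr] at hj
  by_cases h1 : deg j = deg i
  · exact hf.2 j (by rwa [if_pos h1] at hj)
  · rw [if_neg h1] at hj; exact absurd rfl hj

variable {I : Submodule K R} (hI : ∀ r : R, ∀ x ∈ I, r * x ∈ I ∧ x * r ∈ I)

include hmul deg_add graded hI in
/-- every nonzero element of `⟨HT(I)⟩` has its leading monomial in `LM(I)` -/
lemma ht_lm {g : R} (hg : g ∈ twoSidedSpan K R (HTset K deg b (I : Set R))) (hg0 : g ≠ 0) :
    ∃ i, IsLM K b g i ∧ ∃ f ∈ (I : Set R), IsLM K b f i := by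
  -- the invariant Q
  set Q : R → Prop := fun g => ∀ e : ℕ, ∃ g' ∈ I,
      (∀ j, deg j = e → (b.repr g) j = (b.repr g') j) ∧
      (∀ j, (b.repr g') j ≠ 0 → deg j ≤ e) with hQ
  have hQg : Q g := by
    have hg' := twoSidedSpan_le_span_sandwich b (HTset K deg b (I : Set R)) hg
    clear hg hg0
    induction hg' using Submodule.span_induction with
    | mem y hy =>
      obtain ⟨u, v, h, ⟨f, hfI, p, hne, hreprh, hdegf⟩, rfl⟩ := hy
      intro e
      by_cases he : e = deg u + p + deg v
      · subst he
        have hmem : b u * f * b v ∈ I := by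
          have h1 := (hI (b v) f hfI).2
          have h2 := (hI (b u) _ h1).1
          rwa [← mul_assoc] at h2
        have hdiff : b u * f * b v - b u * h * b v = b u * (f - h) * b v := by
          rw [mul_sub, sub_mul]
        have hdiffsupp : ∀ j, (b.repr (b u * (f - h) * b v)) j ≠ 0 →
            deg j < deg u + p + deg v := by
          intro j hj
          obtain ⟨j₀, hj₀, hdeg⟩ := supp_sandwich b deg hmul @deg_add hj
          rw [map_sub, Finsupp.sub_apply, hreprh j₀] at hj₀
          by_cases h1 : deg j₀ = p
          · rw [if_pos h1, sub_self] at hj₀; exact absurd rfl hj₀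
          · rw [if_neg h1, sub_zero] at hj₀
            have : deg j₀ < p := lt_of_le_of_ne (hdegf j₀ hj₀) h1
            omega
        refine ⟨b u * f * b v, hmem, fun j hj => ?_, fun j hj => ?_⟩
        · by_contra hne'
          have hsubne : (b.repr (b u * f * b v - b u * h * b v)) j ≠ 0 := by
            rw [map_sub, Finsupp.sub_apply]
            intro h0
            exact hne' (sub_eq_zero.mp h0).symm
          rw [hdiff] at hsubne
          exact absurd (hdiffsupp j hsubne) (by omega)
        · by_contra hgt
          have hy0 : (b.repr (b u * h * b v)) j = 0 := by
            by_contra h0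
            obtain ⟨j₀, hj₀, hdeg⟩ := supp_sandwich b deg hmul @deg_add h0
            rw [hreprh j₀] at hj₀
            by_cases h1 : deg j₀ = p
            · rw [h1] at hdeg; omega
            · rw [if_neg h1] at hj₀; exact hj₀ rfl
          have hd0 : (b.repr (b u * (f - h) * b v)) j = 0 := by
            by_contra h0; exact absurd (hdiffsupp j h0) (by omega)
          rw [← hdiff, map_sub, Finsupp.sub_apply, hy0, sub_zero] at hd0
          exact hj hd0
      · refine ⟨0, Submodule.zero_mem _, fun j hj => ?_, by simp⟩
        -- y is homogeneous of degree deg u + p + deg v, and e differs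
        rw [map_zero]
        by_contra h0
        obtain ⟨j₀, hj₀, hdeg⟩ := supp_sandwich b deg hmul @deg_add (x := h) (u := u) (v := v) h0
        rw [hreprh j₀] at hj₀
        by_cases h1 : deg j₀ = p
        · rw [h1] at hdeg; omega
        · rw [if_neg h1] at hj₀; exact hj₀ rfl
    | zero => intro e; exact ⟨0, Submodule.zero_mem _, by simp, by simp⟩
    | add y z _ _ hy hz =>
      intro e
      obtain ⟨g1, hg1, he1, hd1⟩ := hy e
      obtain ⟨g2, hg2, he2, hd2⟩ := hz e
      refine ⟨g1 + g2, Submodule.add_mem _ hg1 hg2, fun j hj => ?_, fun j hj => ?_⟩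
      · simp only [map_add, Finsupp.add_apply, he1 j hj, he2 j hj]
      · simp only [map_add, Finsupp.add_apply] at hj
        rcases ne_or_eq ((b.repr g1) j) 0 with h1 | h1
        · exact hd1 j h1
        · exact hd2 j (by rw [h1, zero_add] at hj; exact hj)
    | smul c y _ hy =>
      intro e
      obtain ⟨g1, hg1, he1, hd1⟩ := hy e
      refine ⟨c • g1, Submodule.smul_mem _ _ hg1, fun j hj => ?_, fun j hj => ?_⟩
      · simp only [map_smul, Finsupp.smul_apply, he1 j hj]
      · simp only [map_smul, Finsupp.smul_apply, smul_eq_mul] at hj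
        exact hd1 j (right_ne_zero_of_mul hj)
  -- now the endgame
  have hsupp : (b.repr g).support.Nonempty := by
    rw [Finsupp.support_nonempty_iff]; simpa using hg0
  set e : ℕ := ((b.repr g).support.image deg).max' (hsupp.image deg) with he
  obtain ⟨j₀, hj₀s, hj₀⟩ := Finset.mem_image.mp
    (((b.repr g).support.image deg).max'_mem (hsupp.image deg))
  have hj₀ne : (b.repr g) j₀ ≠ 0 := Finsupp.mem_support_iff.mp hj₀s
  have hle : ∀ j, (b.repr g) j ≠ 0 → deg j ≤ e :=
    fun j hj => Finset.le_max' _ _ (Finset.mem_image.mpr ⟨j, Finsupp.mem_support_iff.mpr hj, rfl⟩)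
  obtain ⟨g', hg'I, hcoe, hdle⟩ := hQg e
  have hg'j₀ : (b.repr g') j₀ ≠ 0 := by rw [← hcoe j₀ hj₀]; exact hj₀ne
  have hg'0 : g' ≠ 0 := fun h0 => hg'j₀ (by rw [h0, map_zero]; rfl)
  obtain ⟨i, hi⟩ := exists_isLM b hg'0
  have hdegi : deg i = e := by
    have h1 : deg i ≤ e := hdle i hi.1
    rcases h1.lt_or_eq with h2 | h2
    · exact absurd (graded (hj₀ ▸ h2)) (not_lt.mpr (hi.2 j₀ hg'j₀))
    · exact h2
  refine ⟨i, ⟨?_, fun j hj => ?_⟩, g', hg'I, hi⟩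
  · rw [hcoe i hdegi]; exact hi.1
  · rcases (hle j hj).lt_or_eq with h2 | h2
    · exact (graded (hdegi ▸ h2)).le
    · exact hi.2 j (by rw [← hcoe j h2]; exact hj)

end HT

section Quot

variable {N : Set ι} {J : Submodule K R}

lemma quotient_basis
    (hinf : Submodule.span K (b '' N) ⊓ J = ⊥) (hsup : Submodule.span K (b '' N) ⊔ J = ⊤)
    {A : Type x} [Ring A] [Algebra K A] (p : R →ₐ[K] A) (hsurj : Function.Surjective p)
    (hker : ∀ x : R, p x = 0 ↔ x ∈ J) :
    LinearIndependent K (fun i : N => p (b i)) ∧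
    Submodule.span K (Set.range fun i : N => p (b i)) = ⊤ := by
  constructor
  · rw [linearIndependent_iff]
    intro l hl
    have h1 : p (Finsupp.linearCombination K (fun i : N => b i) l) = 0 := by
      have h := Finsupp.apply_linearCombination K (p.toLinearMap) (fun i : N => b i) l
      simp only [AlgHom.toLinearMap_apply] at h
      rw [h]
      exact hl
    have h2 : (Finsupp.linearCombination K (fun i : N => b i) l) ∈ J := (hker _).mp h1
    have h3 : (Finsupp.linearCombination K (fun i : N => b i) l) ∈
        Submodule.span K (b '' N) := by
      have : Set.range (fun i : N => b i) ⊆ b '' N := by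
        rintro _ ⟨i, rfl⟩; exact ⟨i, i.2, rfl⟩
      have hmem : Finsupp.linearCombination K (fun i : N => b i) l ∈
          Submodule.span K (Set.range fun i : N => b i) := by
        rw [← Finsupp.range_linearCombination]
        exact ⟨l, rfl⟩
      exact Submodule.span_mono this hmem
    have h4 : (Finsupp.linearCombination K (fun i : N => b i) l) = 0 := by
      have := hinf ▸ Submodule.mem_inf.mpr ⟨h3, h2⟩
      simpa using this
    have hli : LinearIndependent K (fun i : N => b i) :=
      b.linearIndependent.comp Subtype.val Subtype.val_injective
    exact linearIndependent_iff.mp hli l h4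
  · rw [eq_top_iff]
    rintro a -
    obtain ⟨x, rfl⟩ := hsurj a
    have hx : x ∈ Submodule.span K (b '' N) ⊔ J := hsup.symm ▸ Submodule.mem_top
    obtain ⟨s, hs, y, hy, rfl⟩ := Submodule.mem_sup.mp hx
    have hps : p s ∈ Submodule.span K (Set.range fun i : N => p (b i)) := by
      have h1 : p.toLinearMap s ∈ Submodule.map p.toLinearMap (Submodule.span K (b '' N)) :=
        Submodule.mem_map_of_mem hs
      rw [Submodule.map_span, ← Set.image_comp, Set.image_eq_range] at h1
      exact h1
    have hpy : p y = 0 := (hker y).mpr hy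
    rw [map_add, hpy, add_zero]
    exact hps

end Quot

end Statement19Aux

theorem statement19
    (b : Module.Basis ι K R) (mulIdx : ι → ι → Option ι)
    (hord : IsMonomialOrdering K b mulIdx)
    (I : Submodule K R) (hI : ∀ r : R, ∀ x ∈ I, r * x ∈ I ∧ x * r ∈ I) :
    -- R = I ⊕ K-span(B∖LM(I))
    (Submodule.span K (b '' {i : ι | ¬ ∃ f ∈ (I : Set R), IsLM K b f i}) ⊓ I = ⊥ ∧
     Submodule.span K (b '' {i : ι | ¬ ∃ f ∈ (I : Set R), IsLM K b f i}) ⊔ I = ⊤) ∧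
    -- R = ⟨LM(I)⟩ ⊕ K-span(B∖LM(I))
    (Submodule.span K (b '' {i : ι | ¬ ∃ f ∈ (I : Set R), IsLM K b f i}) ⊓
        twoSidedSpan K R (LMset K b (I : Set R)) = ⊥ ∧
     Submodule.span K (b '' {i : ι | ¬ ∃ f ∈ (I : Set R), IsLM K b f i}) ⊔
        twoSidedSpan K R (LMset K b (I : Set R)) = ⊤) ∧
    -- (i) the image of B∖LM(I) is a K-basis of A = R/I
    (∀ (A : Type x) (_ : Ring A) (_ : Algebra K A) (p : R →ₐ[K] A),
      Function.Surjective p → (∀ x : R, p x = 0 ↔ x ∈ I) →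
      LinearIndependent K
        (fun i : {i : ι | ¬ ∃ f ∈ (I : Set R), IsLM K b f i} => p (b i)) ∧
      Submodule.span K
        (Set.range fun i : {i : ι | ¬ ∃ f ∈ (I : Set R), IsLM K b f i} => p (b i)) = ⊤) ∧
    -- (i) ... and of R/⟨LM(I)⟩
    (∀ (A' : Type x) (_ : Ring A') (_ : Algebra K A') (p' : R →ₐ[K] A'),
      Function.Surjective p' →
      (∀ x : R, p' x = 0 ↔ x ∈ twoSidedSpan K R (LMset K b (I : Set R))) →
      LinearIndependent K
        (fun i : {i : ι | ¬ ∃ f ∈ (I : Set R), IsLM K b f i} => p' (b i)) ∧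
      Submodule.span K
        (Set.range fun i : {i : ι | ¬ ∃ f ∈ (I : Set R), IsLM K b f i} => p' (b i)) = ⊤) ∧
    -- (i) ... and, for a graded monomial ordering, of R/⟨HT(I)⟩
    (∀ deg : ι → ℕ, IsGradedMonomialOrdering K b mulIdx deg →
      ∀ (A'' : Type x) (_ : Ring A'') (_ : Algebra K A'') (p'' : R →ₐ[K] A''),
      Function.Surjective p'' →
      (∀ x : R, p'' x = 0 ↔ x ∈ twoSidedSpan K R (HTset K deg b (I : Set R))) →
      LinearIndependent K
        (fun i : {i : ι | ¬ ∃ f ∈ (I : Set R), IsLM K b f i} => p'' (b i)) ∧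
      Submodule.span K
        (Set.range fun i : {i : ι | ¬ ∃ f ∈ (I : Set R), IsLM K b f i} => p'' (b i)) = ⊤) ∧
    -- (ii) finite-dimensionality and dimensions
    (∀ (A : Type x) (_ : Ring A) (_ : Algebra K A) (p : R →ₐ[K] A),
      Function.Surjective p → (∀ x : R, p x = 0 ↔ x ∈ I) →
      ∀ (A' : Type x) (_ : Ring A') (_ : Algebra K A') (p' : R →ₐ[K] A'),
      Function.Surjective p' →
      (∀ x : R, p' x = 0 ↔ x ∈ twoSidedSpan K R (LMset K b (I : Set R))) →
      (FiniteDimensional K A ↔ FiniteDimensional K A') ∧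
      (FiniteDimensional K A →
        Module.finrank K A = Module.finrank K A' ∧
        Module.finrank K A = Nat.card {i : ι | ¬ ∃ f ∈ (I : Set R), IsLM K b f i})) := by
    classical
  obtain ⟨hmul, mo1, mo2, mo3, hwf⟩ := hord
  have hinf1 : Submodule.span K (b '' {i : ι | ¬ ∃ f ∈ (I : Set R), IsLM K b f i}) ⊓ I = ⊥ := by
    refine inf_eq_bot_of_lm b _ I fun g hg hg0 => ?_
    obtain ⟨i, hi⟩ := exists_isLM b hg0
    exact ⟨i, hi, fun hc => hc ⟨g, hg, hi⟩⟩
  have hsup1 : Submodule.span K (b '' {i : ι | ¬ ∃ f ∈ (I : Set R), IsLM K b f i}) ⊔ I = ⊤ := by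
    refine sup_eq_top_of_lm b hwf _ I fun i hiN => ?_
    obtain ⟨f, hf, hfi⟩ := not_not.mp hiN
    exact ⟨f, hf, hfi⟩
  have hLM := twoSidedSpan_LMset_eq b hmul @mo1 @mo2 hI
  have hinf2 : Submodule.span K (b '' {i : ι | ¬ ∃ f ∈ (I : Set R), IsLM K b f i}) ⊓
      twoSidedSpan K R (LMset K b (I : Set R)) = ⊥ := by
    refine inf_eq_bot_of_lm b _ _ fun g hg hg0 => ?_
    obtain ⟨i, hi⟩ := exists_isLM b hg0
    refine ⟨i, hi, fun hc => ?_⟩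
    exact hc (b.mem_span_image.mp (hLM ▸ hg) (Finsupp.mem_support_iff.mpr hi.1))
  have hsup2 : Submodule.span K (b '' {i : ι | ¬ ∃ f ∈ (I : Set R), IsLM K b f i}) ⊔
      twoSidedSpan K R (LMset K b (I : Set R)) = ⊤ := by
    refine sup_eq_top_of_lm b hwf _ _ fun i hiN => ?_
    obtain ⟨f, hf, hfi⟩ := not_not.mp hiN
    exact ⟨b i, subset_twoSidedSpan K _ ⟨f, hf, i, hfi, rfl⟩, isLM_basis b i⟩
  refine ⟨⟨hinf1, hsup1⟩, ⟨hinf2, hsup2⟩, ?_, ?_, ?_, ?_⟩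
  · intro A _ _ p hs hk
    exact quotient_basis b hinf1 hsup1 p hs hk
  · intro A' _ _ p' hs hk
    exact quotient_basis b hinf2 hsup2 p' hs hk
  · intro deg hgord A'' _ _ p'' hs hk
    have hinf3 : Submodule.span K (b '' {i : ι | ¬ ∃ f ∈ (I : Set R), IsLM K b f i}) ⊓
        twoSidedSpan K R (HTset K deg b (I : Set R)) = ⊥ := by
      refine inf_eq_bot_of_lm b _ _ fun g hg hg0 => ?_
      obtain ⟨i, hi, hfL⟩ := ht_lm b deg hgord.hmul @hgord.deg_add @hgord.graded hI hg hg0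
      exact ⟨i, hi, fun hc => hc hfL⟩
    have hsup3 : Submodule.span K (b '' {i : ι | ¬ ∃ f ∈ (I : Set R), IsLM K b f i}) ⊔
        twoSidedSpan K R (HTset K deg b (I : Set R)) = ⊤ := by
      refine sup_eq_top_of_lm b hwf _ _ fun i hiN => ?_
      obtain ⟨f, hf, hfi⟩ := not_not.mp hiN
      obtain ⟨h, hht, hhi, -⟩ := exists_HT_s19 b deg @hgord.graded hfi
      exact ⟨h, subset_twoSidedSpan K _ ⟨f, hf, hht⟩, hhi⟩
    exact quotient_basis b hinf3 hsup3 p'' hs hk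
  · intro A _ _ p hs hk A' _ _ p' hs' hk'
    obtain ⟨li, sp⟩ := quotient_basis b hinf1 hsup1 p hs hk
    obtain ⟨li', sp'⟩ := quotient_basis b hinf2 hsup2 p' hs' hk'
    let bA : Module.Basis {i : ι | ¬ ∃ f ∈ (I : Set R), IsLM K b f i} K A := Module.Basis.mk li sp.ge
    let bA' : Module.Basis {i : ι | ¬ ∃ f ∈ (I : Set R), IsLM K b f i} K A' := Module.Basis.mk li' sp'.ge
    refine ⟨⟨fun hA => ?_, fun hA' => ?_⟩, fun hA => ⟨?_, ?_⟩⟩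
    · haveI := hA
      haveI := FiniteDimensional.fintypeBasisIndex bA
      exact Module.Finite.of_basis bA'
    · haveI := hA'
      haveI := FiniteDimensional.fintypeBasisIndex bA'
      exact Module.Finite.of_basis bA
    · rw [Module.finrank_eq_nat_card_basis bA, Module.finrank_eq_nat_card_basis bA']
    · exact Module.finrank_eq_nat_card_basis bA
end
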